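/- arXiv:1205.1706 — 2 statements merged into one kernel-verified Lean document; each statement's English description precedes it below -/
import Mathlib

section
/- There is an absolute constant C such that for all integers N ≥ 8, all integers h with 1 ≤ h ≤ N^{1/2}, and all integers x with N < x ≤ 2N, setting M = ⌊(N−h)^{1/3}⌋, one has | Σ_{d₁ < M} (1/d₁) Σ_{d₂ ≤ x/(d₁ M)} 1/d₂ − ( (log M + γ) log x + γ² − (3/2) log² M + γ₁ ) | ≤ C N^{−1/3} log N. -/
/-!
Since `x ≥ M³`, each inner sum is a harmonic number `H_q` with `q = ⌊x / (d₁ M)⌋ ≥ 1`, so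
`H_q = log x - log d₁ - log M + γ + O(d₁ M / x)`; weighted by `1 / d₁` these errors add up to
`O(M² / x) = O(1 / M)`. The main terms sum to `A H_{M-1} - ∑_{d < M} log d / d` with
`A = log x - log M + γ`, and `H_{M-1} = log M + γ + O(1 / M)`,
`∑_{d < M} log d / d = (log M)² / 2 - γ₁ + O(log M / M)`. The second estimate holds because, for
the sequence `s` whose limit defines `γ₁`, `s n - 1 / n` increases and `s n + (log n + 1) / n`
decreases.
Finally `N - h ≥ N / 2` gives `M ≍ N^{1/3}`.
-/

open Finset Filter Real

local notation "γ" => Real.eulerMascheroniConstant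

lemma one_div_add_one_le_log_add_one_sub_log {x : ℝ} (hx : 0 < x) :
    1 / (x + 1) ≤ log (x + 1) - log x := by
  have h := one_sub_inv_le_log_of_pos (by positivity : 0 < (x + 1) / x)
  rw [log_div (by positivity) hx.ne', inv_div] at h
  have e : 1 - x / (x + 1) = 1 / (x + 1) := by field_simp; ring
  linarith

lemma log_add_one_sub_log_le {x : ℝ} (hx : 0 < x) : log (x + 1) - log x ≤ 1 / x := by
  have h := log_le_sub_one_of_pos (by positivity : 0 < (x + 1) / x)
  rw [log_div (by positivity) hx.ne'] at h
  have e : (x + 1) / x - 1 = 1 / x := by field_simp; ring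
  linarith

lemma sum_Icc_one_div_eq_harmonic (n : ℕ) : ∑ i ∈ Icc 1 n, 1 / (i : ℝ) = harmonic n := by
  simp [harmonic_eq_sum_Icc]

lemma harmonic_sub_log_sub_eulerMascheroniConstant_mem_Ioc {n : ℕ} (hn : n ≠ 0) :
    (harmonic n : ℝ) - log n - γ ∈ Set.Ioc (0 : ℝ) (1 / n) := by
  have hlow := eulerMascheroniConstant_lt_eulerMascheroniSeq' n
  rw [eulerMascheroniSeq', if_neg hn] at hlow
  have hup := eulerMascheroniSeq_lt_eulerMascheroniConstant n
  rw [eulerMascheroniSeq] at hup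
  have hlog := log_add_one_sub_log_le (Nat.cast_pos.2 (Nat.pos_of_ne_zero hn))
  constructor <;> linarith

lemma abs_harmonic_floor_sub_log_sub_eulerMascheroniConstant_le {y : ℝ} (hy : 1 ≤ y) :
    |(harmonic ⌊y⌋₊ : ℝ) - log y - γ| ≤ 2 / y := by
  set q := ⌊y⌋₊
  have hq : 0 < q := Nat.floor_pos.2 hy
  have hqR : (0 : ℝ) < q := Nat.cast_pos.2 hq
  have hqy : (q : ℝ) ≤ y := Nat.floor_le (by linarith)
  have hyq : y < q + 1 := Nat.lt_floor_add_one y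
  obtain ⟨hH₀, hH₁⟩ := harmonic_sub_log_sub_eulerMascheroniConstant_mem_Ioc hq.ne'
  have hlog_lo : log q ≤ log y := log_le_log hqR hqy
  have hlog_hi : log y - log q ≤ 1 / q :=
    (sub_le_sub_right (log_le_log (by linarith) hyq.le) _).trans (log_add_one_sub_log_le hqR)
  -- `q ≥ 1` and `q + 1 > y` give `2 q > y`
  have hqy2 : 1 / (q : ℝ) ≤ 2 / y := by
    rw [div_le_div_iff₀ hqR (by linarith)]
    have : (1 : ℝ) ≤ q := Nat.one_le_cast.2 hq
    linarith
  rw [abs_le]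
  constructor <;> linarith

noncomputable def stieltjesSeq (m : ℕ) : ℝ := log m ^ 2 / 2 - ∑ j ∈ Icc 1 m, log j / j

lemma stieltjesSeq_succ (n : ℕ) :
    stieltjesSeq (n + 1) =
      stieltjesSeq n + (log (n + 1) ^ 2 - log n ^ 2) / 2 - log (n + 1) / (n + 1) := by
  simp only [stieltjesSeq, sum_Icc_succ_top (Nat.le_add_left 1 n), Nat.cast_add_one]
  ring

lemma stieltjesSeq_sub_one_div_le_succ {n : ℕ} (hn : n ≠ 0) :
    stieltjesSeq n - 1 / n ≤ stieltjesSeq (n + 1) - 1 / (n + 1 : ℕ) := by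
  have hn1 : (1 : ℝ) ≤ n := Nat.one_le_cast.2 (Nat.pos_of_ne_zero hn)
  have ha : 0 ≤ log n := log_nonneg hn1
  have hlo := one_div_add_one_le_log_add_one_sub_log (by linarith : (0 : ℝ) < n)
  have hhi := log_add_one_sub_log_le (by linarith : (0 : ℝ) < n)
  rw [stieltjesSeq_succ, Nat.cast_add_one]
  set a := log n
  set b := log (n + 1)
  set c := 1 / (n : ℝ)
  set d := 1 / ((n : ℝ) + 1)
  have hcd : c - d = c * d := by simp only [c, d]; field_simp; ring
  have hd : 0 < d := by positivity
  have e : b / (n + 1) = b * d := by simp only [d]; ring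
  rw [e]
  -- `(b² - a²) / 2 - b d ≥ d (a + b) / 2 - b d = - d (b - a) / 2 ≥ - c d`
  nlinarith [mul_nonneg (by linarith : 0 ≤ b - a - d) (by linarith : 0 ≤ a + b),
    mul_nonneg hd.le (by linarith : 0 ≤ c - (b - a)), mul_pos hd (by positivity : 0 < c)]

lemma stieltjesSeq_succ_add_le {n : ℕ} (hn : n ≠ 0) :
    stieltjesSeq (n + 1) + (log (n + 1 : ℕ) + 1) / (n + 1 : ℕ) ≤
      stieltjesSeq n + (log n + 1) / n := by
  have hn1 : (1 : ℝ) ≤ n := Nat.one_le_cast.2 (Nat.pos_of_ne_zero hn)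
  have ha : 0 ≤ log n := log_nonneg hn1
  have hlo := one_div_add_one_le_log_add_one_sub_log (by linarith : (0 : ℝ) < n)
  have hhi := log_add_one_sub_log_le (by linarith : (0 : ℝ) < n)
  rw [stieltjesSeq_succ, Nat.cast_add_one, add_div, add_div]
  set a := log n
  set b := log (n + 1)
  have hc : 1 / (n : ℝ) ≤ 2 * (1 / ((n : ℝ) + 1)) := by
    rw [mul_one_div, div_le_div_iff₀ (by linarith) (by linarith)]; linarith
  set c := 1 / (n : ℝ)
  set d := 1 / ((n : ℝ) + 1)
  have hcd : c - d = c * d := by simp only [c, d]; field_simp; ring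
  have e1 : a / n = a * c := by simp only [c]; ring
  have e2 : b / (n + 1) = b * d := by simp only [d]; ring
  rw [e1, e2]
  -- `(b² - a²) / 2 ≤ c (a + b) / 2 = a c + c (b - a) / 2 ≤ a c + c² / 2 ≤ a c + c d`
  nlinarith [mul_nonneg (by linarith : 0 ≤ c - (b - a)) (by linarith : 0 ≤ a + b),
    mul_nonneg (by positivity : (0 : ℝ) ≤ c) (by linarith : 0 ≤ c - (b - a)),
    mul_nonneg (by positivity : (0 : ℝ) ≤ c) (by linarith : 0 ≤ 2 * d - c)]

lemma abs_stieltjesSeq_sub_le {γ₁ : ℝ} (hγ₁ : Tendsto stieltjesSeq atTop (nhds γ₁)) {m : ℕ}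
    (hm : m ≠ 0) : |stieltjesSeq m - γ₁| ≤ (log m + 1) / m := by
  have hinv : Tendsto (fun n : ℕ => 1 / (n : ℝ)) atTop (nhds 0) :=
    tendsto_one_div_atTop_nhds_zero_nat
  have hlog : Tendsto (fun n : ℕ => log n / n) atTop (nhds 0) :=
    isLittleO_log_id_atTop.tendsto_div_nhds_zero.comp tendsto_natCast_atTop_atTop
  have hlow : stieltjesSeq m - 1 / m ≤ γ₁ := by
    have hmono := monotone_add_nat_of_le_succ (f := fun n => stieltjesSeq n - 1 / n) (k := m)
      fun n hn => stieltjesSeq_sub_one_div_le_succ (by omega)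
    have hlim : Tendsto (fun n => stieltjesSeq n - 1 / n) atTop (nhds γ₁) := by
      simpa using hγ₁.sub hinv
    simpa using hmono.ge_of_tendsto (hlim.comp (tendsto_add_atTop_nat m)) 0
  have hhigh : γ₁ ≤ stieltjesSeq m + (log m + 1) / m := by
    have hanti := antitone_add_nat_of_succ_le
      (f := fun n => stieltjesSeq n + (log n + 1) / n) (k := m)
      fun n hn => stieltjesSeq_succ_add_le (by omega)
    have hlim : Tendsto (fun n => stieltjesSeq n + (log n + 1) / n) atTop (nhds γ₁) := by
      simpa [add_div] using hγ₁.add (hlog.add hinv)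
    simpa using hanti.le_of_tendsto (hlim.comp (tendsto_add_atTop_nat m)) 0
  have h : 1 / (m : ℝ) ≤ (log m + 1) / m := by
    gcongr
    linarith [log_natCast_nonneg m]
  rw [abs_le]
  constructor <;> linarith

lemma sum_Ico_one_div_mul_sub_log (A : ℝ) {M : ℕ} (hM : M ≠ 0) :
    ∑ d ∈ Ico 1 M, 1 / (d : ℝ) * (A - log d) =
      A * (harmonic M - 1 / M) - (log M ^ 2 / 2 - stieltjesSeq M - log M / M) := by
  have hsplit : ∑ d ∈ Ico 1 M, 1 / (d : ℝ) * (A - log d) =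
      A * ∑ d ∈ Ico 1 M, 1 / (d : ℝ) - ∑ d ∈ Ico 1 M, log d / d := by
    rw [mul_sum, ← sum_sub_distrib]
    exact sum_congr rfl fun d _ => by ring
  obtain ⟨k, rfl⟩ := Nat.exists_eq_add_one_of_ne_zero hM
  rw [hsplit, stieltjesSeq, ← sum_Icc_one_div_eq_harmonic, Ico_add_one_right_eq_Icc,
    sum_Icc_succ_top (Nat.le_add_left 1 k), sum_Icc_succ_top (Nat.le_add_left 1 k)]
  ring

lemma abs_sum_Ico_one_div_mul_sub_log_sub_le {γ₁ : ℝ}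
    (hγ₁ : Tendsto stieltjesSeq atTop (nhds γ₁)) (A : ℝ) {M : ℕ} (hM : M ≠ 0) :
    |∑ d ∈ Ico 1 M, 1 / (d : ℝ) * (A - log d) - (A * (log M + γ) - log M ^ 2 / 2 + γ₁)| ≤
      (|A| + 2 * log M + 1) / M := by
  have hH : |(harmonic M : ℝ) - 1 / M - log M - γ| ≤ 1 / M := by
    obtain ⟨h₀, h₁⟩ := harmonic_sub_log_sub_eulerMascheroniConstant_mem_Ioc hM
    rw [abs_le]
    constructor <;> linarith
  have hS := abs_stieltjesSeq_sub_le hγ₁ hM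
  have hlog : 0 ≤ log M := log_natCast_nonneg M
  calc _ = |A * ((harmonic M : ℝ) - 1 / M - log M - γ) + (stieltjesSeq M - γ₁) + log M / M| := by
        rw [sum_Ico_one_div_mul_sub_log A hM]; congr 1; ring
    _ ≤ |A| * (1 / M) + (log M + 1) / M + log M / M := by
        refine (abs_add_le _ _).trans (add_le_add ((abs_add_le _ _).trans ?_) ?_)
        · rw [abs_mul]
          gcongr
        · rw [abs_of_nonneg (by positivity)]
    _ = (|A| + 2 * log M + 1) / M := by ring

lemma abs_one_div_mul_sum_Icc_sub_le {x M d : ℕ} (hMx : (M : ℝ) ^ 3 ≤ x) (hd : d ∈ Ico 1 M) :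
    |1 / (d : ℝ) * ∑ i ∈ Icc 1 (x / (d * M)), 1 / (i : ℝ) -
        1 / (d : ℝ) * (log x - log M + γ - log d)| ≤ 2 * M / x := by
  obtain ⟨hd1, hdM⟩ := mem_Ico.1 hd
  have hd0 : (0 : ℝ) < d := Nat.cast_pos.2 hd1
  have hdM' : (d : ℝ) ≤ M := Nat.cast_le.2 hdM.le
  have hM1 : (1 : ℝ) ≤ M := Nat.one_le_cast.2 (hd1.trans hdM.le)
  have hdMx : (d : ℝ) * M ≤ x := calc
    (d : ℝ) * M ≤ M ^ 2 := by rw [sq]; gcongr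
    _ ≤ M ^ 3 := pow_le_pow_right₀ hM1 (by norm_num)
    _ ≤ x := hMx
  have hx0 : (0 : ℝ) < x := hdMx.trans_lt' (by positivity)
  set y := (x : ℝ) / (d * M) with hy_def
  have hy : 1 ≤ y := by rw [le_div_iff₀ (by positivity)]; linarith
  have hfloor : x / (d * M) = ⌊y⌋₊ := by rw [← Nat.floor_div_eq_div (K := ℝ)]; push_cast; rfl
  have hlog : log y = log x - log d - log M := by
    rw [log_div hx0.ne' (by positivity), log_mul hd0.ne' (by positivity)]
    ring
  rw [hfloor, sum_Icc_one_div_eq_harmonic, ← mul_sub, abs_mul, abs_of_pos (by positivity)]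
  calc 1 / (d : ℝ) * |(harmonic ⌊y⌋₊ : ℝ) - (log x - log M + γ - log d)|
      = 1 / d * |(harmonic ⌊y⌋₊ : ℝ) - log y - γ| := by rw [hlog]; congr 2; ring
    _ ≤ 1 / d * (2 / y) := by
      gcongr
      exact abs_harmonic_floor_sub_log_sub_eulerMascheroniConstant_le hy
    _ = 2 * M / x := by rw [hy_def]; field_simp

lemma abs_sum_Ico_one_div_mul_sum_Icc_sub_le {x M : ℕ} (hMx : (M : ℝ) ^ 3 ≤ x) :
    |∑ d ∈ Ico 1 M, 1 / (d : ℝ) * ∑ i ∈ Icc 1 (x / (d * M)), 1 / (i : ℝ) -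
        ∑ d ∈ Ico 1 M, 1 / (d : ℝ) * (log x - log M + γ - log d)| ≤ 2 / M := by
  rcases Nat.eq_zero_or_pos M with rfl | hM
  · simp
  have hM1 : (1 : ℝ) ≤ M := Nat.one_le_cast.2 hM
  have hx0 : (0 : ℝ) < x := hMx.trans_lt' (by positivity)
  rw [← sum_sub_distrib]
  calc _ ≤ ∑ d ∈ Ico 1 M, 2 * (M : ℝ) / x :=
        (abs_sum_le_sum_abs _ _).trans
          (sum_le_sum fun d hd => abs_one_div_mul_sum_Icc_sub_le hMx hd)
    _ = (M - 1 : ℕ) * (2 * M / x) := by rw [sum_const, nsmul_eq_mul, Nat.card_Ico]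
    _ ≤ M * (2 * M / x) := by gcongr; exact Nat.sub_le M 1
    _ ≤ 2 / M := by
      rw [← mul_div_assoc, div_le_div_iff₀ hx0 (by positivity)]
      linarith

lemma floor_rpow_one_third_bounds {N t : ℝ} (hN : 2 ≤ N) (htN : t ≤ N) (hNt : N ≤ 2 * t) :
    1 ≤ (⌊t ^ ((1 : ℝ) / 3)⌋₊ : ℝ) ∧ (⌊t ^ ((1 : ℝ) / 3)⌋₊ : ℝ) ^ 3 ≤ N ∧
      N ≤ 16 * (⌊t ^ ((1 : ℝ) / 3)⌋₊ : ℝ) ^ 3 := by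
  set M := ⌊t ^ ((1 : ℝ) / 3)⌋₊
  have ht : 1 ≤ t := by linarith
  have hM3 : (M : ℝ) ^ 3 ≤ t := by
    have := (le_rpow_inv_iff_of_pos (Nat.cast_nonneg M) (by linarith) (by norm_num : (0 : ℝ) < 3)).1
      (by rw [← one_div]; exact Nat.floor_le (by positivity))
    exact_mod_cast this
  have htM : t < ((M : ℝ) + 1) ^ 3 := by
    have := (rpow_inv_lt_iff_of_pos (x := t) (y := M + 1) (by linarith) (by positivity)
      (by norm_num : (0 : ℝ) < 3)).1
      (by rw [← one_div]; exact Nat.lt_floor_add_one _)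
    exact_mod_cast this
  have hM1 : (1 : ℝ) ≤ M :=
    Nat.one_le_cast.2 ((Nat.one_le_floor_iff _).2 (one_le_rpow ht (by norm_num)))
  refine ⟨hM1, hM3.trans htN, ?_⟩
  have : ((M : ℝ) + 1) ^ 3 ≤ (2 * M) ^ 3 := by gcongr; linarith
  nlinarith

lemma one_div_le_three_mul_rpow_neg_third {N M : ℝ} (hN : 0 < N) (hM : 0 < M) (h : N ≤ 27 * M ^ 3) :
    1 / M ≤ 3 * N ^ (-(1 : ℝ) / 3) := by
  have hcbrt : N ^ ((1 : ℝ) / 3) ≤ 3 * M := by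
    rw [one_div, rpow_inv_le_iff_of_pos hN.le (by positivity) (by norm_num)]
    norm_num
    linarith
  rw [neg_div, rpow_neg hN.le, ← one_div, mul_one_div, div_le_div_iff₀ hM (by positivity)]
  linarith

lemma abs_double_harmonic_sum_sub_le {γ₁ : ℝ} (hγ₁ : Tendsto stieltjesSeq atTop (nhds γ₁))
    {x M : ℕ} (hM : 1 ≤ (M : ℝ)) (hMx : (M : ℝ) ^ 3 ≤ x) :
    |(∑ d₁ ∈ Ico 1 M, (1 / (d₁ : ℝ)) * ∑ d₂ ∈ Icc 1 (x / (d₁ * M)), (1 / (d₂ : ℝ)))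
        - ((log M + γ) * log x + γ ^ 2 - (3 / 2) * (log M) ^ 2 + γ₁)| ≤
      (log x + log M + 4) / M := by
  have hlogM : 0 ≤ log M := log_nonneg hM
  have hlogx : log M ≤ log x := log_le_log (by linarith) ((le_self_pow₀ hM (by norm_num)).trans hMx)
  have hA : |log x - log M + γ| ≤ log x - log M + 1 := by
    rw [abs_of_nonneg (by linarith [one_half_lt_eulerMascheroniConstant])]
    linarith [eulerMascheroniConstant_lt_two_thirds]
  have hS := abs_sum_Ico_one_div_mul_sum_Icc_sub_le hMx
  have hT := abs_sum_Ico_one_div_mul_sub_log_sub_le hγ₁ (log x - log M + γ)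
    (Nat.one_le_iff_ne_zero.1 (Nat.one_le_cast.1 hM))
  calc _ ≤ 2 / M + (|log x - log M + γ| + 2 * log M + 1) / M := by
        refine (abs_sub_le _ _ _).trans (add_le_add hS (le_of_eq_of_le ?_ hT))
        congr 2; ring
    _ ≤ (log x + log M + 4) / M := by
        rw [← add_div]; exact div_le_div_of_nonneg_right (by linarith) (by positivity)

theorem double_harmonic_sum_asymptotic
    (γ1 : ℝ)
    (hγ1 : Tendsto
      (fun m : ℕ => (Real.log m) ^ 2 / 2 - ∑ j ∈ Icc 1 m, Real.log j / j)
      atTop (nhds γ1)) :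
    ∃ C : ℝ, ∀ N h x : ℕ, 8 ≤ N → 1 ≤ h →
      (h : ℝ) ≤ (N : ℝ) ^ ((1 : ℝ) / 2) → N < x → x ≤ 2 * N →
      |(∑ d₁ ∈ Ico 1 ⌊((N - h : ℕ) : ℝ) ^ ((1 : ℝ) / 3)⌋₊, (1 / (d₁ : ℝ)) *
          ∑ d₂ ∈ Icc 1 (x / (d₁ * ⌊((N - h : ℕ) : ℝ) ^ ((1 : ℝ) / 3)⌋₊)), (1 / (d₂ : ℝ)))
        - ((Real.log ⌊((N - h : ℕ) : ℝ) ^ ((1 : ℝ) / 3)⌋₊ + Real.eulerMascheroniConstant)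
              * Real.log x
            + Real.eulerMascheroniConstant ^ 2
            - (3 / 2) * (Real.log ⌊((N - h : ℕ) : ℝ) ^ ((1 : ℝ) / 3)⌋₊) ^ 2 + γ1)|
        ≤ C * (N : ℝ) ^ (-(1 : ℝ) / 3) * Real.log N := by
  refine ⟨21, fun N h x hN _ hhN hNx hxN => ?_⟩
  have hN8 : (8 : ℝ) ≤ N := by exact_mod_cast hN
  have hx : (N : ℝ) < x ∧ (x : ℝ) ≤ 2 * N := ⟨by exact_mod_cast hNx, by exact_mod_cast hxN⟩
  have hh : (h : ℝ) ≤ N / 2 := hhN.trans <| by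
    rw [← sqrt_eq_rpow, sqrt_le_iff]; constructor <;> nlinarith
  have ht : ((N - h : ℕ) : ℝ) = N - h :=
    Nat.cast_sub (by exact_mod_cast (by linarith : (h : ℝ) ≤ N))
  obtain ⟨hM1, hM3, hNM⟩ := floor_rpow_one_third_bounds (N := N) (t := ((N - h : ℕ) : ℝ))
    (by linarith) (by linarith [h.cast_nonneg (α := ℝ)]) (by linarith)
  set M := ⌊((N - h : ℕ) : ℝ) ^ ((1 : ℝ) / 3)⌋₊
  have hMinv := one_div_le_three_mul_rpow_neg_third (N := N) (M := M) (by linarith) (by linarith)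
    (by linarith)
  have hL : 1 ≤ log N := by
    rw [le_log_iff_exp_le (by linarith)]; linarith [exp_one_lt_d9]
  have hlogM : log M ≤ log N :=
    log_le_log (by linarith) ((le_self_pow₀ hM1 (by norm_num)).trans hM3)
  have hlogx : log x ≤ 2 * log N := calc
    log x ≤ log ((N : ℝ) ^ 2) := log_le_log (by linarith) (by nlinarith)
    _ = 2 * log N := by rw [log_pow]; norm_num
  calc _ ≤ (log x + log M + 4) / M := abs_double_harmonic_sum_sub_le hγ1 hM1 (by linarith)
    _ ≤ 7 * log N * (1 / M) := by
        rw [div_eq_mul_one_div _ (M : ℝ)]; gcongr; linarith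
    _ ≤ 21 * N ^ (-(1 : ℝ) / 3) * log N := by nlinarith
end

section
/- There is an absolute constant K such that for all positive integers N, H with 2H ≤ N and every f: ℕ→ℝ, one has Σ_{N<x≤2N} ( Σ_{x<n≤x+H} f(n) )² ≤ K ( ‖f‖∞ · ( N H² · Σ_{N<x≤2N} ( Σ_{n: |n−x|≤H} (1 − |n−x|/H) f(n) )² )^{1/2} + ‖f‖∞² ( N^{1/2} H^{5/2} + H³ ) ), where ‖f‖∞ = max_{N−2H<n≤2N+2H} |f(n)|. In particular, a bound J̃_f(N,H) ≪ N H²/G for the modified Selberg integral of a balanced f implies the halved-gain bound J_f(N,H) ≪ ‖f‖∞ N H² G^{−1/2} + ‖f‖∞² N^{1/2} H^{5/2} for the Selberg integral. -/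
/-!
Expanding the square and exchanging the order of summation gives
`J_f(N,H) = ∑_n f(n) V(n)`, where `V(n)` is the sum of the window sums `∑_{x<m≤x+H} f(m)` over
those `x ∈ (N, 2N]` whose window contains `n`. For `n ∈ (N+H, 2N]` these `x` form the full block
`[n-H, n)`, and summing window sums over `H` consecutive starting points produces the Fejér kernel:
`V(n) = H · T(n)` with `T(n)` the inner sum of the modified Selberg integral. Cauchy–Schwarz bounds
this part of the sum by `‖f‖∞ (N H² J̃_f(N,H))^{1/2}`, while each of the remaining `2H` values of
`n` contributes at most `H² ‖f‖∞²`, since `|V(n)| ≤ H · H ‖f‖∞`.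
-/

open Finset

theorem Finset.le_ciSup_of_mem {ι α : Type*} [ConditionallyCompleteLattice α] {s : Finset ι}
    {g : ι → α} {i : ι} (hi : i ∈ s) : g i ≤ ⨆ j ∈ s, g j := by
  refine le_ciSup₂ (f := fun j (_ : j ∈ s) => g j) ?_ i hi
  refine (s.finite_toSet.image g).bddAbove.mono ?_
  simp only [Set.iUnion_subset_iff, Set.range_subset_iff]
  exact fun j hj => ⟨j, hj, rfl⟩

theorem Finset.abs_sum_le_of_card_le {ι : Type*} {s : Finset ι} {u : ι → ℝ} {k : ℕ} {B : ℝ}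
    (hs : #s ≤ k) (hB : 0 ≤ B) (hu : ∀ i ∈ s, |u i| ≤ B) : |∑ i ∈ s, u i| ≤ k * B :=
  calc |∑ i ∈ s, u i| ≤ ∑ i ∈ s, |u i| := abs_sum_le_sum_abs _ _
    _ ≤ #s • B := sum_le_card_nsmul _ _ _ hu
    _ ≤ k * B := by
      rw [nsmul_eq_mul]
      exact mul_le_mul_of_nonneg_right (by exact_mod_cast hs) hB

theorem Finset.sum_mul_le_mul_sqrt_card_mul_sqrt {ι : Type*} (s : Finset ι) {u : ι → ℝ}
    (v : ι → ℝ) {M : ℝ} (hM : 0 ≤ M) (hu : ∀ i ∈ s, |u i| ≤ M) :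
    ∑ i ∈ s, u i * v i ≤ M * √(#s) * √(∑ i ∈ s, v i ^ 2) := by
  refine (Real.sum_mul_le_sqrt_mul_sqrt s u v).trans
    (mul_le_mul_of_nonneg_right ?_ (Real.sqrt_nonneg _))
  have hsq : ∑ i ∈ s, u i ^ 2 ≤ #s * M ^ 2 := by
    rw [← nsmul_eq_mul]
    exact sum_le_card_nsmul _ _ _ fun i hi => by
      rw [← sq_abs]
      exact pow_le_pow_left₀ (abs_nonneg _) (hu i hi) 2
  calc √(∑ i ∈ s, u i ^ 2) ≤ √(#s * M ^ 2) := Real.sqrt_le_sqrt hsq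
    _ = M * √(#s) := by rw [Real.sqrt_mul (Nat.cast_nonneg _), Real.sqrt_sq hM, mul_comm]

section WindowSums

variable (f : ℕ → ℝ) (H : ℕ)

def windowSum (x : ℕ) : ℝ := ∑ n ∈ Ioc x (x + H), f n

noncomputable def fejerSum (x : ℕ) : ℝ := ∑ n ∈ Icc (x - H) (x + H), (1 - |(n : ℝ) - x| / H) * f n

theorem sum_windowSum_mul_eq (a b : ℕ) (g : ℕ → ℝ) :
    ∑ x ∈ Ioc a b, windowSum f H x * g x =
      ∑ n ∈ Ioc a (b + H), f n * ∑ x ∈ Ioc a b ∩ Ico (n - H) n, g x := by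
  simp only [windowSum, sum_mul, mul_sum]
  exact sum_comm' fun x n => by simp only [mem_Ioc, mem_inter, mem_Ico]; omega

theorem abs_windowSum_le {M : ℝ} (hM : 0 ≤ M) {x : ℕ} (hf : ∀ n ∈ Ioc x (x + H), |f n| ≤ M) :
    |windowSum f H x| ≤ H * M :=
  abs_sum_le_of_card_le (by simp) hM hf

theorem card_Ico_inter_Ico_sub {n m : ℕ} (hn : H ≤ n) (hm : m ∈ Icc (n - H) (n + H)) :
    (#(Ico (n - H) n ∩ Ico (m - H) m) : ℝ) = H - |(m : ℝ) - n| := by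
  rw [Ico_inter_Ico, Nat.card_Ico]
  rw [mem_Icc] at hm
  have h : ((min n m - max (n - H) (m - H) : ℕ) : ℤ) = H - |(m : ℤ) - n| := by
    rw [abs_eq_max_neg]; omega
  exact_mod_cast h

theorem sum_Ico_windowSum_eq_mul_fejerSum (hH : 0 < H) {n : ℕ} (hn : H ≤ n) :
    ∑ x ∈ Ico (n - H) n, windowSum f H x = H * fejerSum f H n := by
  have hswap : ∑ x ∈ Ico (n - H) n, windowSum f H x
      = ∑ m ∈ Icc (n - H) (n + H), ∑ _x ∈ Ico (n - H) n ∩ Ico (m - H) m, f m :=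
    sum_comm' fun x m => by simp only [mem_Ioc, mem_inter, mem_Ico, mem_Icc]; omega
  rw [hswap, fejerSum, mul_sum]
  refine sum_congr rfl fun m hm => ?_
  rw [sum_const, nsmul_eq_mul, card_Ico_inter_Ico_sub H hn hm]
  field_simp

/-- The window sums over those `x ∈ (a, b]` whose window `(x, x + H]` contains `n`. -/
def coverSum (a b n : ℕ) : ℝ := ∑ x ∈ Ioc a b ∩ Ico (n - H) n, windowSum f H x

variable {f H}

theorem abs_coverSum_le {a b : ℕ} {M : ℝ} (hM0 : 0 ≤ M) (hM : ∀ n ∈ Ioc a (b + H), |f n| ≤ M)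
    (n : ℕ) : |coverSum f H a b n| ≤ H * (H * M) :=
  abs_sum_le_of_card_le
    ((card_le_card inter_subset_right).trans (by simp only [Nat.card_Ico]; omega))
    (mul_nonneg (Nat.cast_nonneg H) hM0)
    fun x hx => abs_windowSum_le f H hM0 fun m hm => hM m (by
      simp only [mem_inter, mem_Ioc] at hx hm ⊢; omega)

theorem coverSum_eq_mul_fejerSum (hH : 0 < H) {a b n : ℕ} (hn : n ∈ Ioc (a + H) b) :
    coverSum f H a b n = H * fejerSum f H n := by
  rw [mem_Ioc] at hn
  have hblock : Ioc a b ∩ Ico (n - H) n = Ico (n - H) n :=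
    inter_eq_right.2 fun x hx => by simp only [mem_Ioc, mem_Ico] at hx ⊢; omega
  rw [coverSum, hblock]
  exact sum_Ico_windowSum_eq_mul_fejerSum f H hH (by omega)

theorem sum_edge_mul_coverSum_le {a b c : ℕ} {M : ℝ} (hM0 : 0 ≤ M)
    (hM : ∀ n ∈ Ioc a (b + H), |f n| ≤ M) (hc : Ioc c (c + H) ⊆ Ioc a (b + H)) :
    ∑ n ∈ Ioc c (c + H), f n * coverSum f H a b n ≤ H ^ 3 * M ^ 2 := by
  have hterm : ∀ n ∈ Ioc c (c + H), |f n * coverSum f H a b n| ≤ M * (H * (H * M)) :=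
    fun n hn => by
      rw [abs_mul]
      exact mul_le_mul (hM n (hc hn)) (abs_coverSum_le hM0 hM n) (abs_nonneg _) hM0
  calc ∑ n ∈ Ioc c (c + H), f n * coverSum f H a b n
      ≤ |∑ n ∈ Ioc c (c + H), f n * coverSum f H a b n| := le_abs_self _
    _ ≤ H * (M * (H * (H * M))) := abs_sum_le_of_card_le (by simp) (by positivity) hterm
    _ = H ^ 3 * M ^ 2 := by ring

theorem sum_central_mul_coverSum_le (hH : 0 < H) {N : ℕ} {M : ℝ} (hM0 : 0 ≤ M)
    (hM : ∀ n ∈ Ioc N (2 * N + H), |f n| ≤ M) :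
    ∑ n ∈ Ioc (N + H) (2 * N), f n * coverSum f H N (2 * N) n
      ≤ M * √(N * H ^ 2 * ∑ x ∈ Ioc N (2 * N), fejerSum f H x ^ 2) := by
  have hcard : √(#(Ioc (N + H) (2 * N)) : ℝ) ≤ √N :=
    Real.sqrt_le_sqrt (by simp only [Nat.card_Ioc]; exact_mod_cast (by omega))
  have hfejer : √(∑ n ∈ Ioc (N + H) (2 * N), fejerSum f H n ^ 2)
      ≤ √(∑ x ∈ Ioc N (2 * N), fejerSum f H x ^ 2) :=
    Real.sqrt_le_sqrt (sum_le_sum_of_subset_of_nonneg (Ioc_subset_Ioc_left (by omega))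
      fun _ _ _ => sq_nonneg _)
  have hCS := sum_mul_le_mul_sqrt_card_mul_sqrt (Ioc (N + H) (2 * N)) (fejerSum f H) hM0
    fun n hn => hM n (Ioc_subset_Ioc (by omega) (by omega) hn)
  rw [sum_congr rfl fun n hn => by rw [coverSum_eq_mul_fejerSum hH hn],
    Real.sqrt_mul' _ (by positivity), Real.sqrt_mul (Nat.cast_nonneg _),
    Real.sqrt_sq (Nat.cast_nonneg _)]
  calc ∑ n ∈ Ioc (N + H) (2 * N), f n * (H * fejerSum f H n)
      = H * ∑ n ∈ Ioc (N + H) (2 * N), f n * fejerSum f H n := by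
        rw [mul_sum]; exact sum_congr rfl fun _ _ => by ring
    _ ≤ H * (M * √N * √(∑ x ∈ Ioc N (2 * N), fejerSum f H x ^ 2)) := by
        gcongr
        exact hCS.trans (by gcongr)
    _ = M * (√N * H * √(∑ x ∈ Ioc N (2 * N), fejerSum f H x ^ 2)) := by ring

theorem sum_sq_windowSum_le (hH : 0 < H) {N : ℕ} (hHN : H ≤ N) {M : ℝ} (hM0 : 0 ≤ M)
    (hM : ∀ n ∈ Ioc N (2 * N + H), |f n| ≤ M) :
    ∑ x ∈ Ioc N (2 * N), windowSum f H x ^ 2 ≤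
      M * √(N * H ^ 2 * ∑ x ∈ Ioc N (2 * N), fejerSum f H x ^ 2) + 2 * (H ^ 3 * M ^ 2) := by
  have hexpand : ∑ x ∈ Ioc N (2 * N), windowSum f H x ^ 2
      = ∑ n ∈ Ioc N (2 * N + H), f n * coverSum f H N (2 * N) n := by
    simp only [sq]
    exact sum_windowSum_mul_eq f H N (2 * N) (windowSum f H)
  rw [hexpand, ← sum_Ioc_consecutive _ (show N ≤ N + H by omega) (by omega),
    ← sum_Ioc_consecutive _ (show N + H ≤ 2 * N by omega) (show 2 * N ≤ 2 * N + H by omega)]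
  have hleft := sum_edge_mul_coverSum_le (c := N) hM0 hM (Ioc_subset_Ioc_right (by omega))
  have hright := sum_edge_mul_coverSum_le (c := 2 * N) hM0 hM (Ioc_subset_Ioc_left (by omega))
  linarith [sum_central_mul_coverSum_le hH hM0 hM]

end WindowSums

theorem selberg_from_modified_selberg_halved_gain :
    ∃ K : ℝ, ∀ N H : ℕ, 0 < N → 0 < H → 2 * H ≤ N → ∀ f : ℕ → ℝ,
      (∑ x ∈ Ioc N (2 * N), (∑ n ∈ Ioc x (x + H), f n) ^ 2)
        ≤ K * ((⨆ n ∈ Ioc (N - 2 * H) (2 * N + 2 * H), |f n|) *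
            Real.sqrt ((N : ℝ) * (H : ℝ) ^ 2 *
              ∑ x ∈ Ioc N (2 * N),
                (∑ n ∈ Icc (x - H) (x + H), (1 - |(n : ℝ) - (x : ℝ)| / H) * f n) ^ 2)
          + (⨆ n ∈ Ioc (N - 2 * H) (2 * N + 2 * H), |f n|) ^ 2 *
              ((N : ℝ) ^ ((1 : ℝ) / 2) * (H : ℝ) ^ ((5 : ℝ) / 2) + (H : ℝ) ^ 3)) := by
  refine ⟨2, fun N H _ hH hHN f => ?_⟩
  set M := ⨆ n ∈ Ioc (N - 2 * H) (2 * N + 2 * H), |f n|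
  have hM0 : 0 ≤ M := Real.iSup_nonneg fun _ => Real.iSup_nonneg fun _ => abs_nonneg _
  have hM : ∀ n ∈ Ioc N (2 * N + H), |f n| ≤ M := fun n hn =>
    le_ciSup_of_mem (g := fun n => |f n|) (by simp only [mem_Ioc] at hn ⊢; omega)
  have hJ := sum_sq_windowSum_le (f := f) hH (by omega) hM0 hM
  have hM_sqrt : 0 ≤ M * √(N * H ^ 2 * ∑ x ∈ Ioc N (2 * N), fejerSum f H x ^ 2) := by positivity
  have hM_rpow : 0 ≤ M ^ 2 * ((N : ℝ) ^ ((1 : ℝ) / 2) * (H : ℝ) ^ ((5 : ℝ) / 2)) := by positivity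
  simp only [windowSum, fejerSum] at hJ hM_sqrt
  linarith
end
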